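/- arXiv:math/0312026 — 2 statements merged into one kernel-verified Lean document; each statement's English description precedes it below -/
import Mathlib

section
/- Let A be a bounded (continuous) linear operator on 𝔅 with A ≠ 0. Then for arbitrary initial data y_0,…,y_{m−1} ∈ 𝔅, the function y(z) = Σ_{k=0}^{m−1} Σ_{n≥0} z^{mn+k} A^n y_k/(mn+k)! converges for |z|_p < ‖A‖^{−1/m} p^{−1/(p−1)}, satisfies y^{(m)}(z) = A y(z) there together with y^{(k)}(0) = y_k (k = 0,…,m−1), and is the unique solution of this Cauchy problem in 𝔄_loc(𝔅). -/
open Filter Topology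

/-!
For a one-variable power series `y = Σ cⱼ zʲ` on a disc, the coefficients of `y⁽ᵐ⁾` are
`(j+m)⋯(j+1) c_{j+m}`, so by uniqueness of power series coefficients `y⁽ᵐ⁾ = A y` is equivalent to
the recursion `(j+m)⋯(j+1) c_{j+m} = A c_j`.  Together with `k! c_k = y_k` for `k < m` this
recursion determines `c`, which gives uniqueness, and the explicit coefficients satisfy it.
Convergence on `‖z‖ < R` comes from Legendre's formula `(p-1) v_p(n!) ≤ n`, i.e.
`|n!|_p ≥ ρⁿ` with `ρ = p^{-1/(p-1)}`, whence `‖c_{mn+k}‖ rᵐⁿ⁺ᵏ ≤ C (r/ρ)ᵏ (‖A‖ (r/ρ)ᵐ)ⁿ`,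
and `‖A‖ (R/ρ)ᵐ = 1`.
-/

/-- `y(z) = Σ cⱼ zʲ` is a solution in `𝔄_loc(𝔅)` of the Cauchy problem
`y⁽ᵐ⁾ = A y`, `y⁽ᵏ⁾(0) = yinit k` (`k = 0, …, m-1`), on the disk `‖z‖ < r`. -/
def IsCauchySolution {K : Type*} [NontriviallyNormedField K]
    {B : Type*} [NormedAddCommGroup B] [NormedSpace K B]
    (D : Submodule K B) (A : B →ₗ[K] B) (m : ℕ) (yinit : ℕ → B)
    (y : K → B) (c : ℕ → B) (r : ℝ) : Prop :=
  0 < r ∧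
  Filter.Tendsto (fun j : ℕ => ‖c j‖ * r ^ j) Filter.atTop (nhds 0) ∧
  (∀ z : K, ‖z‖ < r → HasSum (fun j : ℕ => z ^ j • c j) (y z)) ∧
  (∀ z : K, ‖z‖ < r → y z ∈ D) ∧
  (∀ i < m, ∀ z : K, ‖z‖ < r → DifferentiableAt K (iteratedDeriv i y) z) ∧
  (∀ z : K, ‖z‖ < r → iteratedDeriv m y z = A (y z)) ∧
  (∀ k < m, iteratedDeriv k y 0 = yinit k ∧ (k.factorial : K) • c k = yinit k)

open scoped NNReal ENNReal Nat

section DerivCoeff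

variable {M : Type*} [AddMonoid M]

def derivCoeff (c : ℕ → M) (n : ℕ) : M := (n + 1) • c (n + 1)

theorem derivCoeff_iterate_apply (i : ℕ) (c : ℕ → M) (j : ℕ) :
    derivCoeff^[i] c j = (j + i).descFactorial i • c (j + i) := by
  induction i generalizing c with
  | zero => simp
  | succ i ih =>
    rw [Function.iterate_succ_apply, ih, derivCoeff, smul_smul, ← add_assoc,
      Nat.succ_descFactorial_succ, mul_comm]

theorem eq_of_derivCoeff_iterate_eq_comp [IsAddTorsionFree M] {m : ℕ} (hm : 0 < m)
    {F : M → M} {c d : ℕ → M} (hc : derivCoeff^[m] c = F ∘ c) (hd : derivCoeff^[m] d = F ∘ d)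
    (h : ∀ k < m, c k = d k) : c = d := by
  funext j
  induction j using Nat.strong_induction_on with
  | _ j ih =>
    rcases lt_or_ge j m with hj | hj
    · exact h j hj
    obtain ⟨i, rfl⟩ := Nat.exists_eq_add_of_le' hj
    have hne : (i + m).descFactorial m ≠ 0 := by simp [Nat.descFactorial_eq_zero_iff_lt]
    rw [← nsmul_right_inj hne, ← derivCoeff_iterate_apply, ← derivCoeff_iterate_apply, hc, hd,
      Function.comp_apply, Function.comp_apply, ih i (by omega)]

end DerivCoeff

theorem pow_div_mul_pow_le {a s : ℝ} {m : ℕ} (hm : 0 < m) (ha : 0 ≤ a) (hs : 0 ≤ s)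
    (has : a * s ^ m ≤ 1) (j : ℕ) : a ^ (j / m) * s ^ j ≤ max 1 s ^ m := by
  have hj : s ^ j = (s ^ m) ^ (j / m) * s ^ (j % m) := by
    rw [← pow_mul, ← pow_add, Nat.div_add_mod]
  calc a ^ (j / m) * s ^ j = (a * s ^ m) ^ (j / m) * s ^ (j % m) := by rw [hj, mul_pow]; ring
    _ ≤ 1 * max 1 s ^ m := by
      gcongr
      · exact pow_le_one₀ (by positivity) has
      · exact (pow_le_pow_left₀ hs (le_max_right 1 s) _).trans
          (pow_le_pow_right₀ (le_max_left 1 s) (Nat.mod_lt j hm).le)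
    _ = max 1 s ^ m := one_mul _

theorem rpow_neg_one_div_mul_pow_mul {a : ℝ} (ha : 0 < a) {m : ℕ} (hm : m ≠ 0) (ρ : ℝ) :
    (a ^ (-1 / (m : ℝ)) * ρ) ^ m * a = ρ ^ m := by
  rw [mul_pow, ← Real.rpow_natCast (a ^ _), ← Real.rpow_mul ha.le,
    div_mul_cancel₀ _ (Nat.cast_ne_zero.2 hm), Real.rpow_neg_one]
  field_simp

theorem Padic.pow_le_norm_factorial {p : ℕ} [hp : Fact p.Prime] (n : ℕ) :
    ((p : ℝ) ^ (-(1 : ℝ) / ((p : ℝ) - 1))) ^ n ≤ ‖(n ! : ℚ_[p])‖ := by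
  have hp1 : (1 : ℝ) < p := by exact_mod_cast hp.out.one_lt
  have hlegendre : ((p : ℝ) - 1) * padicValNat p n ! ≤ n := by
    have h := (sub_one_mul_padicValNat_factorial (p := p) n).trans_le (Nat.sub_le _ _)
    rwa [← Nat.cast_le (α := ℝ), Nat.cast_mul, Nat.cast_sub hp.out.one_le, Nat.cast_one] at h
  rw [Padic.norm_eq_zpow_neg_valuation (by exact_mod_cast n.factorial_ne_zero),
    Padic.valuation_natCast, ← Real.rpow_natCast, ← Real.rpow_mul (by positivity),
    ← Real.rpow_intCast]
  apply Real.rpow_le_rpow_of_exponent_le hp1.le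
  rw [Int.cast_neg, Int.cast_natCast, neg_div, neg_mul, neg_le_neg_iff, one_div_mul_eq_div,
    le_div_iff₀ (by linarith), mul_comm]
  exact hlegendre

namespace FormalMultilinearSeries

variable {𝕜 E F : Type*} [NontriviallyNormedField 𝕜] [NormedAddCommGroup E] [NormedSpace 𝕜 E]
  [NormedAddCommGroup F] [NormedSpace 𝕜 F]

variable (𝕜) in
def ofCoeff (c : ℕ → E) : FormalMultilinearSeries 𝕜 𝕜 E :=
  fun n => ContinuousMultilinearMap.mkPiRing 𝕜 (Fin n) (c n)

@[simp]
theorem coeff_ofCoeff (c : ℕ → E) (n : ℕ) : (ofCoeff 𝕜 c).coeff n = c n := by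
  simp [ofCoeff, coeff]

@[simp]
theorem ofCoeff_apply_diag (c : ℕ → E) (n : ℕ) (z : 𝕜) :
    ofCoeff 𝕜 c n (fun _ => z) = z ^ n • c n := by
  simp

@[simp]
theorem norm_ofCoeff (c : ℕ → E) (n : ℕ) : ‖ofCoeff 𝕜 c n‖ = ‖c n‖ :=
  ContinuousMultilinearMap.norm_mkPiRing _

@[simp]
theorem ofCoeff_coeff (p : FormalMultilinearSeries 𝕜 𝕜 E) : ofCoeff 𝕜 p.coeff = p :=
  funext p.mkPiRing_coeff_eq

theorem ofCoeff_injective : Function.Injective (ofCoeff 𝕜 : (ℕ → E) → _) :=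
  fun c d h => funext fun n => by simpa using congrArg (coeff · n) h

theorem _root_.ContinuousLinearMap.compFormalMultilinearSeries_ofCoeff (L : E →L[𝕜] F)
    (c : ℕ → E) : L.compFormalMultilinearSeries (ofCoeff 𝕜 c) = ofCoeff 𝕜 (L ∘ c) := by
  rw [← ofCoeff_coeff (L.compFormalMultilinearSeries _)]
  congr
  funext n
  rw [coeff, ContinuousLinearMap.compFormalMultilinearSeries_apply,
    ContinuousLinearMap.compContinuousMultilinearMap_coe, Function.comp_apply, ← coeff,
    coeff_ofCoeff, Function.comp_apply]

theorem derivSeries_ofCoeff (c : ℕ → E) :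
    (ContinuousLinearMap.apply 𝕜 E 1).compFormalMultilinearSeries (ofCoeff 𝕜 c).derivSeries =
      ofCoeff 𝕜 (derivCoeff c) := by
  rw [← ofCoeff_coeff (ContinuousLinearMap.compFormalMultilinearSeries _ _)]
  congr
  funext n
  rw [coeff, ContinuousLinearMap.compFormalMultilinearSeries_apply,
    ContinuousLinearMap.compContinuousMultilinearMap_coe, Function.comp_apply, ← coeff,
    ContinuousLinearMap.apply_apply, derivSeries_coeff_one, coeff_ofCoeff, derivCoeff]

theorem le_radius_ofCoeff {c : ℕ → E} {C a ρ : ℝ} {m : ℕ} (hm : 0 < m) (ha : 0 ≤ a)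
    (hρ : 0 < ρ) (hc : ∀ j, ‖c j‖ * ρ ^ j ≤ C * a ^ (j / m)) {r : ℝ≥0}
    (hr : (r : ℝ) ^ m * a ≤ ρ ^ m) : (r : ℝ≥0∞) ≤ (ofCoeff 𝕜 c).radius := by
  have hC : 0 ≤ C := by simpa using (norm_nonneg (c 0)).trans (by simpa using hc 0)
  have hs : a * (r / ρ) ^ m ≤ 1 := by
    rw [div_pow, mul_div_assoc', div_le_one (by positivity)]; linarith
  refine le_radius_of_bound _ (C * max 1 (r / ρ) ^ m) fun j => ?_
  calc ‖ofCoeff 𝕜 c j‖ * (r : ℝ) ^ j = ‖c j‖ * ρ ^ j * (r / ρ) ^ j := by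
        rw [norm_ofCoeff, div_pow, mul_assoc, mul_div_cancel₀ _ (by positivity)]
    _ ≤ C * a ^ (j / m) * (r / ρ) ^ j := mul_le_mul_of_nonneg_right (hc j) (by positivity)
    _ ≤ C * max 1 (r / ρ) ^ m := by
      rw [mul_assoc]; gcongr; exact pow_div_mul_pow_le hm ha (by positivity) hs j

end FormalMultilinearSeries

namespace HasFPowerSeriesOnBall

open FormalMultilinearSeries

variable {𝕜 E : Type*} [NontriviallyNormedField 𝕜] [NormedAddCommGroup E] [NormedSpace 𝕜 E]
  [CompleteSpace E] {f : 𝕜 → E} {c : ℕ → E} {x : 𝕜} {r : ℝ≥0∞}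

theorem deriv_ofCoeff (h : HasFPowerSeriesOnBall f (ofCoeff 𝕜 c) x r) :
    HasFPowerSeriesOnBall (deriv f) (ofCoeff 𝕜 (derivCoeff c)) x r := by
  have h' := (ContinuousLinearMap.apply 𝕜 E (1 : 𝕜)).comp_hasFPowerSeriesOnBall h.fderiv
  rwa [derivSeries_ofCoeff] at h'

theorem iteratedDeriv_ofCoeff (h : HasFPowerSeriesOnBall f (ofCoeff 𝕜 c) x r) (i : ℕ) :
    HasFPowerSeriesOnBall (iteratedDeriv i f) (ofCoeff 𝕜 (derivCoeff^[i] c)) x r := by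
  induction i with
  | zero => simpa
  | succ i ih =>
    rw [iteratedDeriv_succ, Function.iterate_succ_apply']
    exact ih.deriv_ofCoeff

theorem iteratedDeriv_eq_factorial_smul (h : HasFPowerSeriesOnBall f (ofCoeff 𝕜 c) x r)
    (k : ℕ) : iteratedDeriv k f x = k ! • c k := by
  rw [← (h.iteratedDeriv_ofCoeff k).coeff_zero (fun _ => 0), ofCoeff_apply_diag,
    derivCoeff_iterate_apply, pow_zero, one_smul, zero_add, Nat.descFactorial_self]

theorem iteratedDeriv_eq_comp_iff (h : HasFPowerSeriesOnBall f (ofCoeff 𝕜 c) x r)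
    (L : E →L[𝕜] E) (m : ℕ) :
    (∀ z ∈ Metric.eball x r, iteratedDeriv m f z = L (f z)) ↔ derivCoeff^[m] c = L ∘ c := by
  have hL := L.comp_hasFPowerSeriesOnBall h
  rw [L.compFormalMultilinearSeries_ofCoeff] at hL
  constructor
  · intro hm
    have hev : iteratedDeriv m f =ᶠ[𝓝 x] L ∘ f :=
      Filter.eventually_of_mem (Metric.eball_mem_nhds x h.r_pos) hm
    exact ofCoeff_injective (((h.iteratedDeriv_ofCoeff m).hasFPowerSeriesAt.congr
      hev).eq_formalMultilinearSeries hL.hasFPowerSeriesAt)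
  · intro hm
    have hm' := h.iteratedDeriv_ofCoeff m
    rw [hm] at hm'
    exact hm'.unique hL

end HasFPowerSeriesOnBall

theorem mem_eball_zero_ofReal {E : Type*} [SeminormedAddGroup E] {z : E} {r : ℝ} :
    z ∈ Metric.eball (0 : E) (ENNReal.ofReal r) ↔ ‖z‖ < r := by
  rw [Metric.eball_ofReal, mem_ball_zero_iff]

open FormalMultilinearSeries

section CauchyCoeff

variable {K B : Type*} [NontriviallyNormedField K] [NormedAddCommGroup B] [NormedSpace K B]
  (A : B →L[K] B) {m : ℕ} {yinit : ℕ → B}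

def cauchyCoeff (m : ℕ) (yinit : ℕ → B) (j : ℕ) : B :=
  (j ! : K)⁻¹ • A^[j / m] (yinit (j % m))

theorem eq_cauchyCoeff {c : ℕ → B}
    (hc : ∀ n, ∀ k < m, c (m * n + k) = ((m * n + k) ! : K)⁻¹ • A^[n] (yinit k)) (hm : 0 < m) :
    c = cauchyCoeff A m yinit := by
  funext j
  have h := hc (j / m) (j % m) (Nat.mod_lt j hm)
  rwa [Nat.div_add_mod] at h

variable [CharZero K]

theorem factorial_smul_cauchyCoeff {k : ℕ} (hk : k < m) :
    (k ! : K) • cauchyCoeff A m yinit k = yinit k := by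
  rw [cauchyCoeff, smul_inv_smul₀ (by exact_mod_cast k.factorial_ne_zero), Nat.div_eq_of_lt hk,
    Nat.mod_eq_of_lt hk, Function.iterate_zero_apply]

theorem derivCoeff_iterate_cauchyCoeff (hm : 0 < m) :
    derivCoeff^[m] (cauchyCoeff A m yinit) = A ∘ cauchyCoeff A m yinit := by
  funext j
  have hfac : ((j + m).descFactorial m : K) * ((j + m) ! : K)⁻¹ = (j ! : K)⁻¹ := by
    rw [← Nat.factorial_mul_descFactorial (Nat.le_add_left m j), Nat.add_sub_cancel,
      Nat.cast_mul, mul_inv, mul_left_comm, mul_inv_cancel₀, mul_one]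
    exact Nat.cast_ne_zero.2 (by simp [Nat.descFactorial_eq_zero_iff_lt])
  rw [derivCoeff_iterate_apply, Function.comp_apply, cauchyCoeff, cauchyCoeff,
    Nat.add_div_right _ hm, Nat.add_mod_right, ← Nat.cast_smul_eq_nsmul K, smul_smul, hfac,
    map_smul, Function.iterate_succ_apply']

theorem norm_cauchyCoeff_mul_pow_le {C ρ : ℝ} (hC : ∀ k < m, ‖yinit k‖ ≤ C) (hm : 0 < m)
    (hρ : ∀ n, ρ ^ n ≤ ‖(n ! : K)‖) (j : ℕ) :
    ‖cauchyCoeff A m yinit j‖ * ρ ^ j ≤ C * ‖A‖ ^ (j / m) := by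
  have hj : 0 < ‖(j ! : K)‖ := norm_pos_iff.2 (by exact_mod_cast j.factorial_ne_zero)
  have hiter : ‖A^[j / m] (yinit (j % m))‖ ≤ ‖A‖ ^ (j / m) * ‖yinit (j % m)‖ := by
    simpa using (A.lipschitz.iterate (j / m)).norm_le_mul (iterate_map_zero A _) (yinit (j % m))
  calc ‖cauchyCoeff A m yinit j‖ * ρ ^ j
      = ‖A^[j / m] (yinit (j % m))‖ * (ρ ^ j / ‖(j ! : K)‖) := by
        rw [cauchyCoeff, norm_smul, norm_inv]; ring
    _ ≤ ‖A^[j / m] (yinit (j % m))‖ := mul_le_of_le_one_right (norm_nonneg _)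
        (div_le_one_of_le₀ (hρ j) hj.le)
    _ ≤ C * ‖A‖ ^ (j / m) := by
      rw [mul_comm]
      exact hiter.trans (mul_le_mul_of_nonneg_left (hC _ (Nat.mod_lt j hm)) (by positivity))

theorem le_radius_ofCoeff_cauchyCoeff (hA0 : A ≠ 0) (hm : 0 < m) {ρ : ℝ} (hρ : 0 < ρ)
    (hfac : ∀ n, ρ ^ n ≤ ‖(n ! : K)‖) :
    ENNReal.ofReal (‖A‖ ^ (-1 / (m : ℝ)) * ρ) ≤ (ofCoeff K (cauchyCoeff A m yinit)).radius := by
  have hA : 0 < ‖A‖ := norm_pos_iff.2 hA0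
  rw [ENNReal.ofReal_eq_coe_nnreal (by positivity)]
  refine le_radius_ofCoeff hm hA.le hρ (norm_cauchyCoeff_mul_pow_le A
    (fun k hk => Finset.single_le_sum (fun i _ => norm_nonneg (yinit i)) (Finset.mem_range.2 hk))
    hm hfac) (le_of_eq ?_)
  exact rpow_neg_one_div_mul_pow_mul hA hm.ne' ρ

end CauchyCoeff

section IsCauchySolution

variable {K B : Type*} [NontriviallyNormedField K] [NormedAddCommGroup B] [NormedSpace K B]
  {D : Submodule K B} {A : B →L[K] B} {m : ℕ} {yinit : ℕ → B} {y : K → B} {c : ℕ → B} {r : ℝ}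

theorem IsCauchySolution.hasFPowerSeriesOnBall {L : B →ₗ[K] B}
    (h : IsCauchySolution D L m yinit y c r) :
    HasFPowerSeriesOnBall y (ofCoeff K c) 0 (ENNReal.ofReal r) where
  r_le := by
    rw [ENNReal.ofReal_eq_coe_nnreal h.1.le]
    exact le_radius_of_tendsto _ (l := 0) (by simpa using h.2.1)
  r_pos := ENNReal.ofReal_pos.2 h.1
  hasSum hz := by simpa using h.2.2.1 _ (mem_eball_zero_ofReal.1 hz)

variable [CompleteSpace B]

theorem IsCauchySolution.eq_cauchyCoeff [CharZero K] (hm : 0 < m)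
    (h : IsCauchySolution D (A : B →ₗ[K] B) m yinit y c r) : c = cauchyCoeff A m yinit := by
  have : IsAddTorsionFree B := .of_isTorsionFree K B
  have hrec : derivCoeff^[m] c = A ∘ c :=
    (h.hasFPowerSeriesOnBall.iteratedDeriv_eq_comp_iff A m).1 fun z hz =>
      h.2.2.2.2.2.1 z (mem_eball_zero_ofReal.1 hz)
  refine eq_of_derivCoeff_iterate_eq_comp hm hrec (derivCoeff_iterate_cauchyCoeff A hm)
    fun k hk => smul_right_injective B (by exact_mod_cast k.factorial_ne_zero : (k ! : K) ≠ 0) ?_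
  exact (h.2.2.2.2.2.2 k hk).2.trans (factorial_smul_cauchyCoeff A hk).symm

theorem HasFPowerSeriesOnBall.isCauchySolution {R : ℝ≥0∞}
    (hy : HasFPowerSeriesOnBall y (ofCoeff K c) 0 R) (hr : 0 < r) (hrR : ENNReal.ofReal r < R)
    (hrec : derivCoeff^[m] c = A ∘ c) (hinit : ∀ k < m, (k ! : K) • c k = yinit k) :
    IsCauchySolution ⊤ (A : B →ₗ[K] B) m yinit y c r := by
  have hball (z : K) (hz : ‖z‖ < r) : z ∈ Metric.eball (0 : K) R :=
    Metric.eball_subset_eball hrR.le (mem_eball_zero_ofReal.2 hz)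
  refine ⟨hr, ?_, fun z hz => by simpa using hy.hasSum (hball z hz), fun _ _ => trivial,
    fun i _ z hz => ((hy.iteratedDeriv_ofCoeff i).analyticAt_of_mem (hball z hz)).differentiableAt,
    fun z hz => (hy.iteratedDeriv_eq_comp_iff A m).2 hrec z (hball z hz),
    fun k hk => ⟨?_, hinit k hk⟩⟩
  · have hlt : (r.toNNReal : ℝ≥0∞) < (ofCoeff K c).radius := hrR.trans_le hy.r_le
    have h := (Asymptotics.isLittleO_one_iff ℝ).1 ((ofCoeff K c).isLittleO_one_of_lt_radius hlt)
    simpa only [norm_ofCoeff, Real.coe_toNNReal _ hr.le] using h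
  · rw [hy.iteratedDeriv_eq_factorial_smul, ← Nat.cast_smul_eq_nsmul K, hinit k hk]

end IsCauchySolution

theorem bounded_operator_wellposed_general
    {p : ℕ} [Fact p.Prime]
    {K : Type*} [NontriviallyNormedField K] [Algebra ℚ_[p] K]
    (hK : ∀ q : ℚ_[p], ‖algebraMap ℚ_[p] K q‖ = ‖q‖)
    {B : Type*} [NormedAddCommGroup B] [NormedSpace K B] [CompleteSpace B]
    (A : B →L[K] B) (hA0 : A ≠ 0)
    (m : ℕ) (hm : 1 ≤ m) (yinit : ℕ → B)
    (c : ℕ → B)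
    (hc : ∀ (n : ℕ), ∀ k < m,
      c (m * n + k) = ((m * n + k).factorial : K)⁻¹ • (⇑A)^[n] (yinit k))
    (y : K → B) (hy : ∀ z : K, y z = ∑' j : ℕ, z ^ j • c j)
    (R : ℝ) (hR : R = ‖A‖ ^ (-(1 : ℝ) / (m : ℝ)) * (p : ℝ) ^ (-(1 : ℝ) / ((p : ℝ) - 1))) :
    (∀ z : K, ‖z‖ < R → Summable (fun j : ℕ => z ^ j • c j)) ∧
    (∀ z : K, ‖z‖ < R → iteratedDeriv m y z = A (y z)) ∧
    (∀ k < m, iteratedDeriv k y 0 = yinit k) ∧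
    (∀ r : ℝ, 0 < r → r < R →
      IsCauchySolution (⊤ : Submodule K B) (A : B →ₗ[K] B) m yinit y c r) ∧
    (∀ (y' : K → B) (c' : ℕ → B) (r' : ℝ),
      IsCauchySolution (⊤ : Submodule K B) (A : B →ₗ[K] B) m yinit y' c' r' →
        ∀ j : ℕ, c' j = c j) := by
  have : CharZero K := charZero_of_injective_algebraMap (algebraMap ℚ_[p] K).injective
  obtain rfl := eq_cauchyCoeff A hc hm
  set ρ : ℝ := (p : ℝ) ^ (-(1 : ℝ) / ((p : ℝ) - 1))
  have hρ : 0 < ρ := by have := (Fact.out : p.Prime).pos; positivity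
  have hfac (n : ℕ) : ρ ^ n ≤ ‖(n ! : K)‖ := by
    rw [← map_natCast (algebraMap ℚ_[p] K), hK]
    exact Padic.pow_le_norm_factorial n
  have hrad := le_radius_ofCoeff_cauchyCoeff A (yinit := yinit) hA0 hm hρ hfac
  rw [← hR] at hrad
  have hR0 : 0 < ENNReal.ofReal R := ENNReal.ofReal_pos.2 (by rw [hR]; positivity)
  have hsum : y = (ofCoeff K (cauchyCoeff A m yinit)).sum :=
    funext fun z => by simp [hy, FormalMultilinearSeries.sum]
  have hball : HasFPowerSeriesOnBall y (ofCoeff K (cauchyCoeff A m yinit)) 0 (.ofReal R) :=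
    hsum ▸ ((ofCoeff K _).hasFPowerSeriesOnBall (hR0.trans_le hrad)).mono hR0 hrad
  have hrec := derivCoeff_iterate_cauchyCoeff A (yinit := yinit) hm
  have hinit (k : ℕ) (hk : k < m) := factorial_smul_cauchyCoeff A (yinit := yinit) hk
  refine ⟨fun z hz => ?_, fun z hz => ?_, fun k hk => ?_, fun r hr hrR => ?_,
    fun y' c' r' hsol j => congrFun (hsol.eq_cauchyCoeff hm) j⟩
  · simpa using (hball.hasSum (mem_eball_zero_ofReal.2 hz)).summable
  · exact (hball.iteratedDeriv_eq_comp_iff A m).2 hrec z (mem_eball_zero_ofReal.2 hz)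
  · rw [hball.iteratedDeriv_eq_factorial_smul, ← Nat.cast_smul_eq_nsmul K, hinit k hk]
  · exact hball.isCauchySolution hr (ENNReal.ofReal_lt_ofReal_iff'.2 ⟨hrR, hr.trans hrR⟩) hrec
      hinit

theorem bounded_operator_wellposed
    {p : ℕ} [Fact p.Prime]
    {K : Type*} [NontriviallyNormedField K] [CompleteSpace K] [IsAlgClosed K]
    [IsUltrametricDist K] [Algebra ℚ_[p] K]
    (hK : ∀ q : ℚ_[p], ‖algebraMap ℚ_[p] K q‖ = ‖q‖)
    {B : Type*} [NormedAddCommGroup B] [NormedSpace K B] [CompleteSpace B]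
    [IsUltrametricDist B]
    (A : B →L[K] B) (hA0 : A ≠ 0)
    (m : ℕ) (hm : 1 ≤ m) (yinit : ℕ → B)
    (c : ℕ → B)
    (hc : ∀ (n : ℕ), ∀ k < m,
      c (m * n + k) = ((m * n + k).factorial : K)⁻¹ • (⇑A)^[n] (yinit k))
    (y : K → B) (hy : ∀ z : K, y z = ∑' j : ℕ, z ^ j • c j)
    (R : ℝ) (hR : R = ‖A‖ ^ (-(1 : ℝ) / (m : ℝ)) * (p : ℝ) ^ (-(1 : ℝ) / ((p : ℝ) - 1))) :
    (∀ z : K, ‖z‖ < R → Summable (fun j : ℕ => z ^ j • c j)) ∧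
    (∀ z : K, ‖z‖ < R → iteratedDeriv m y z = A (y z)) ∧
    (∀ k < m, iteratedDeriv k y 0 = yinit k) ∧
    (∀ r : ℝ, 0 < r → r < R →
      IsCauchySolution (⊤ : Submodule K B) (A : B →ₗ[K] B) m yinit y c r) ∧
    (∀ (y' : K → B) (c' : ℕ → B) (r' : ℝ),
      IsCauchySolution (⊤ : Submodule K B) (A : B →ₗ[K] B) m yinit y' c' r' →
        ∀ j : ℕ, c' j = c j) :=
  bounded_operator_wellposed_general hK A hA0 m hm yinit c hc y hy R hR
end

section
/- Let x ∈ E(A) with σ = σ(x;A) and r = σ^{−1/m} p^{−1/(p−1)} (r = ∞ if σ = 0). Then for each k ∈ {0,…,m−1}, the 𝔅-valued function u(z) = F_k(z;A)x satisfies the differential equation u^{(m)}(z) = A u(z) on the disk |z|_p < r, with initial data u^{(i)}(0) = δ_{ik}·x for i = 0,…,m−1 (δ_{ik} the Kronecker delta). Moreover F_0^{(ml)}(z;A)x = F_0(z;A)(A^l x) for all l ∈ ℕ. -/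
/-!
Write `F_k(z)x = ∑_j z^j/j! · c_j` with `c_j = A^{j/m} x` for `j ≡ k (mod m)` and `c_j = 0`
otherwise. Inside its disc of convergence such an exponential generating function can be
differentiated termwise, which shifts the coefficients; shifting by `m l` replaces `x` by `A^l x`,
and `A` commutes with the sum because its graph is closed. Legendre's bound
`|1/j!|_p ≤ p^{j/(p-1)}` and the root test put the disc `|z|_p < σ^{-1/m} p^{-1/(p-1)}` inside
the disc of convergence of every shift.
-/

open Filter Topology Metric
open scoped NNReal ENNReal Nat

theorem norm_inv_factorial_le {p : ℕ} [Fact p.Prime] {K : Type*} [NormedDivisionRing K]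
    [Algebra ℚ_[p] K] (hK : ∀ q : ℚ_[p], ‖algebraMap ℚ_[p] K q‖ = ‖q‖) (j : ℕ) :
    ‖((j ! : K))⁻¹‖ ≤ ((p : ℝ) ^ (1 / ((p : ℝ) - 1))) ^ j := by
  have hp : p.Prime := Fact.out
  set v := padicValNat p j !
  have hv : (p - 1) * v ≤ j := by
    rw [sub_one_mul_padicValNat_factorial]
    exact Nat.sub_le _ _
  have hp1 : (1 : ℝ) < p := by exact_mod_cast hp.one_lt
  have hnorm : ‖((j ! : K))⁻¹‖ = (p : ℝ) ^ v := by
    rw [norm_inv, ← map_natCast (algebraMap ℚ_[p] K), hK,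
      Padic.norm_eq_zpow_neg_valuation (Nat.cast_ne_zero.mpr j.factorial_ne_zero),
      Padic.valuation_natCast, zpow_neg, inv_inv, zpow_natCast]
  have hpow : ((p : ℝ) ^ (1 / ((p : ℝ) - 1))) ^ ((p - 1) * v) = (p : ℝ) ^ v := by
    rw [pow_mul, ← Real.rpow_natCast _ (p - 1), ← Real.rpow_mul (by positivity),
      Nat.cast_sub hp.one_le, Nat.cast_one, one_div_mul_cancel (by linarith), Real.rpow_one]
  rw [hnorm, ← hpow]
  have hbase : 1 ≤ (p : ℝ) ^ (1 / ((p : ℝ) - 1)) :=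
    Real.one_le_rpow hp1.le (one_div_nonneg.mpr (by linarith))
  exact pow_le_pow_right₀ hbase hv

section ExponentialGeneratingFunction

variable {K : Type*} [NontriviallyNormedField K] {B : Type*} [NormedAddCommGroup B]
  [NormedSpace K B]

noncomputable def egf (c : ℕ → B) (z : K) : B :=
  ∑' j, ((j ! : K))⁻¹ • z ^ j • c j

variable (K) in
noncomputable def egfSeries (c : ℕ → B) : FormalMultilinearSeries K K B :=
  fun j => ContinuousMultilinearMap.mkPiRing K (Fin j) (((j ! : K))⁻¹ • c j)

theorem egfSeries_apply_diag (c : ℕ → B) (j : ℕ) (z : K) :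
    egfSeries K c j (fun _ => z) = ((j ! : K))⁻¹ • z ^ j • c j := by
  simp [egfSeries, ContinuousMultilinearMap.mkPiRing_apply, smul_comm ((j ! : K))⁻¹]

theorem norm_egfSeries (c : ℕ → B) (j : ℕ) : ‖egfSeries K c j‖ = ‖((j ! : K))⁻¹‖ * ‖c j‖ := by
  rw [egfSeries, ContinuousMultilinearMap.norm_mkPiRing, norm_smul]

theorem egf_eq_sum (c : ℕ → B) : egf c = (egfSeries K c).sum := by
  funext z
  exact tsum_congr fun j => (egfSeries_apply_diag c j z).symm

theorem egf_zero (c : ℕ → B) : egf c (0 : K) = c 0 := by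
  rw [egf, tsum_eq_single 0 fun j hj => by rw [zero_pow hj, zero_smul, smul_zero]]
  simp

theorem hasSum_egf [CompleteSpace B] {c : ℕ → B} {z : K}
    (hz : z ∈ eball 0 (egfSeries K c).radius) :
    HasSum (fun j => ((j ! : K))⁻¹ • z ^ j • c j) (egf c z) := by
  simpa only [egf_eq_sum, egfSeries_apply_diag] using (egfSeries K c).hasSum hz

theorem egfSeries_derivSeries_apply [CharZero K] (c : ℕ → B) (n : ℕ) (z : K) :
    (egfSeries K c).derivSeries n (fun _ => z) 1 = ((n ! : K))⁻¹ • z ^ n • c (n + 1) := by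
  have hz : (fun _ : Fin n => z) = fun i => z • (fun _ : Fin n => (1 : K)) i := by
    simp
  rw [hz, ContinuousMultilinearMap.map_smul_univ, smul_apply,
    FormalMultilinearSeries.derivSeries_apply_diag, egfSeries_apply_diag]
  simp only [Finset.prod_const, Finset.card_univ, Fintype.card_fin, one_pow, one_smul]
  rw [← Nat.cast_smul_eq_nsmul K, smul_smul, smul_smul, smul_smul, Nat.factorial_succ]
  congr 1
  push_cast
  field_simp

theorem deriv_egf [CharZero K] [CompleteSpace B] {c : ℕ → B} {z : K}
    (hz : z ∈ eball 0 (egfSeries K c).radius) :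
    deriv (egf c) z = egf (fun j => c (j + 1)) z := by
  have hf : HasFPowerSeriesOnBall (egf c) (egfSeries K c) 0 (egfSeries K c).radius :=
    egf_eq_sum (K := K) c ▸ (egfSeries K c).hasFPowerSeriesOnBall (pos_of_gt hz)
  have hsum := (ContinuousLinearMap.apply K B (1 : K)).hasSum (hf.fderiv.hasSum hz)
  simp only [ContinuousLinearMap.apply_apply, egfSeries_derivSeries_apply, zero_add] at hsum
  exact hsum.tsum_eq.symm

theorem eqOn_iteratedDeriv_egf [CharZero K] [CompleteSpace B] {c : ℕ → B} {r : ℝ≥0∞}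
    (hr : ∀ i, r ≤ (egfSeries K fun j => c (j + i)).radius) (n : ℕ) :
    Set.EqOn (iteratedDeriv n (egf c)) (egf fun j => c (j + n)) (eball (0 : K) r) := by
  induction n with
  | zero => intro z _; simp
  | succ n ih =>
    intro z hz
    rw [iteratedDeriv_succ, (ih.eventuallyEq_of_mem (isOpen_eball.mem_nhds hz)).deriv_eq,
      deriv_egf (eball_subset_eball (hr n) hz)]
    simp only [add_assoc, add_comm 1 n]

end ExponentialGeneratingFunction

theorem LinearMap.mem_and_map_eq_of_hasSum_of_isClosed_graph {R M ι : Type*} [Semiring R]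
    [AddCommMonoid M] [Module R M] [TopologicalSpace M] {D : Submodule R M} {A : M →ₗ[R] M}
    (hA : IsClosed {q : M × M | q.1 ∈ D ∧ A q.1 = q.2}) {f : ι → M} {a b : M}
    (hfD : ∀ i, f i ∈ D) (ha : HasSum f a) (hb : HasSum (fun i => A (f i)) b) :
    a ∈ D ∧ A a = b :=
  hA.mem_of_tendsto (ha.prodMk_nhds hb) <| .of_forall fun s =>
    ⟨D.sum_mem fun i _ => hfD i, map_sum A f s⟩

theorem map_egf_of_isClosed_graph {K : Type*} [NontriviallyNormedField K] {B : Type*}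
    [NormedAddCommGroup B] [NormedSpace K B] [CompleteSpace B] {D : Submodule K B}
    {A : B →ₗ[K] B} (hA : IsClosed {q : B × B | q.1 ∈ D ∧ A q.1 = q.2}) {c d : ℕ → B}
    (hcD : ∀ j, c j ∈ D) (hAc : ∀ j, A (c j) = d j) {z : K}
    (hc : z ∈ eball 0 (egfSeries K c).radius) (hd : z ∈ eball 0 (egfSeries K d).radius) :
    A (egf c z) = egf d z :=
  (LinearMap.mem_and_map_eq_of_hasSum_of_isClosed_graph hA
    (fun j => D.smul_mem _ (D.smul_mem _ (hcD j))) (hasSum_egf hc)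
    (by simpa only [map_smul, hAc] using hasSum_egf hd)).2

section SpreadMod

variable {B : Type*} {m k : ℕ}

def spreadMod [Zero B] (m k : ℕ) (a : ℕ → B) (j : ℕ) : B :=
  if j % m = k then a (j / m) else 0

variable [Zero B]

theorem spreadMod_mul_add (hk : k < m) (a : ℕ → B) (n : ℕ) :
    spreadMod m k a (m * n + k) = a n := by
  rw [spreadMod, Nat.mul_add_mod, Nat.mod_eq_of_lt hk, if_pos rfl,
    Nat.mul_add_div (by omega), Nat.div_eq_of_lt hk, Nat.add_zero]

theorem spreadMod_add_mul (hm : 0 < m) (a : ℕ → B) (j l : ℕ) :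
    spreadMod m k a (j + m * l) = spreadMod m k (fun n => a (n + l)) j := by
  simp only [spreadMod, Nat.add_mul_mod_self_left, Nat.add_mul_div_left _ _ hm]

theorem spreadMod_iterate_add_mul (hm : 0 < m) (f : B → B) (v : B) (j l : ℕ) :
    spreadMod m k (fun n => f^[n] v) (j + m * l) = spreadMod m k (fun n => f^[n] (f^[l] v)) j := by
  simp only [spreadMod_add_mul hm, Function.iterate_add_apply]

theorem spreadMod_of_lt {i : ℕ} (hi : i < m) (a : ℕ → B) :
    spreadMod m k a i = if i = k then a 0 else 0 := by
  rw [spreadMod, Nat.mod_eq_of_lt hi, Nat.div_eq_of_lt hi]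

theorem apply_spreadMod {C : Type*} [Zero C] {f : B → C} (hf : f 0 = 0) (a : ℕ → B) (j : ℕ) :
    f (spreadMod m k a j) = spreadMod m k (fun n => f (a n)) j := by
  unfold spreadMod
  split_ifs <;> simp [hf]

theorem apply_spreadMod_iterate (hm : 0 < m) {f : B → B} (hf : f 0 = 0) (v : B) (j : ℕ) :
    f (spreadMod m k (fun n => f^[n] v) j) = spreadMod m k (fun n => f^[n] v) (j + m) := by
  calc f (spreadMod m k (fun n => f^[n] v) j)
      = spreadMod m k (fun n => f^[n] (f^[1] v)) j := by
        rw [apply_spreadMod hf]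
        simp only [Function.iterate_one, (Function.Commute.iterate_self f _).eq]
    _ = spreadMod m k (fun n => f^[n] v) (j + m) := by
        rw [← spreadMod_iterate_add_mul hm, mul_one]

theorem spreadMod_mem {R M : Type*} [Semiring R] [AddCommMonoid M] [Module R M]
    {D : Submodule R M} {a : ℕ → M} (ha : ∀ n, a n ∈ D) (j : ℕ) : spreadMod m k a j ∈ D := by
  unfold spreadMod
  split_ifs
  exacts [ha _, D.zero_mem]

theorem support_spreadMod_subset (a : ℕ → B) :
    Function.support (spreadMod m k a) ⊆ Set.range fun n => m * n + k := by
  intro j hj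
  by_cases h : j % m = k
  · exact ⟨j / m, by simp only [← h, Nat.div_add_mod]⟩
  · exact absurd (if_neg h) hj

end SpreadMod

theorem norm_spreadMod_mul_pow_le {B : Type*} [SeminormedAddCommGroup B] {m k : ℕ}
    {a : ℕ → B} {s C : ℝ} (hs : 0 ≤ s) (ha : ∀ n, ‖a n‖ * (s ^ m) ^ n ≤ C) (j : ℕ) :
    ‖spreadMod m k a j‖ * s ^ j ≤ C * s ^ k := by
  unfold spreadMod
  split_ifs with h
  · have hj : s ^ j = (s ^ m) ^ (j / m) * s ^ k := by
      rw [← pow_mul, ← pow_add, ← h, Nat.div_add_mod]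
    rw [hj, ← mul_assoc]
    exact mul_le_mul_of_nonneg_right (ha _) (pow_nonneg hs k)
  · have : 0 ≤ C := le_trans (by positivity) (ha 0)
    simpa using mul_nonneg this (pow_nonneg hs k)

theorem egf_spreadMod {K : Type*} [NontriviallyNormedField K] {B : Type*} [NormedAddCommGroup B]
    [NormedSpace K B] {m k : ℕ} (hk : k < m) (a : ℕ → B) (z : K) :
    egf (spreadMod m k a) z = ∑' n, ((m * n + k) ! : K)⁻¹ • z ^ (m * n + k) • a n := by
  have hinj : Function.Injective fun n => m * n + k := fun n n' h =>
    Nat.eq_of_mul_eq_mul_left (by omega) (Nat.add_right_cancel h)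
  rw [egf, ← hinj.tsum_eq]
  · simp only [spreadMod_mul_add hk]
  · exact fun j hj => support_spreadMod_subset a fun h0 => hj (by simp [h0])

theorem isBoundedUnder_rpow_one_div_of_le_mul_pow {a : ℕ → ℝ} {α C : ℝ} (hα : 0 ≤ α)
    (ha : ∀ n, 0 ≤ a n) (h : ∀ n, a n ≤ C * α ^ n) :
    IsBoundedUnder (· ≤ ·) atTop fun n : ℕ => a n ^ (1 / (n : ℝ)) := by
  have hC : 0 ≤ C := by simpa using (ha 0).trans (h 0)
  refine isBoundedUnder_of_eventually_le (a := max C 1 * α) ?_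
  filter_upwards [eventually_ge_atTop 1] with n hn
  have hn1 : 1 / (n : ℝ) ≤ 1 := by
    rw [div_le_one (by positivity)]
    exact_mod_cast hn
  calc a n ^ (1 / (n : ℝ)) ≤ (C * α ^ n) ^ (1 / (n : ℝ)) :=
        Real.rpow_le_rpow (ha n) (h n) (by positivity)
    _ = C ^ (1 / (n : ℝ)) * α := by
        rw [Real.mul_rpow hC (by positivity), one_div, Real.pow_rpow_inv_natCast hα (by omega)]
    _ ≤ max C 1 ^ (1 / (n : ℝ)) * α := by gcongr; exact le_max_left C 1
    _ ≤ max C 1 * α := by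
        gcongr
        exact Real.rpow_le_self_of_one_le (le_max_right C 1) hn1

theorem exists_mul_pow_le_of_limsup_mul_lt_one {a : ℕ → ℝ} (ha : ∀ n, 0 ≤ a n)
    (hb : IsBoundedUnder (· ≤ ·) atTop fun n : ℕ => a n ^ (1 / (n : ℝ))) {r : ℝ} (hr : 0 < r)
    (h : limsup (fun n : ℕ => a n ^ (1 / (n : ℝ))) atTop * r < 1) :
    ∃ C, ∀ n, a n * r ^ n ≤ C := by
  have hev : ∀ᶠ n : ℕ in atTop, a n * r ^ n ≤ 1 := by
    filter_upwards [eventually_lt_of_limsup_lt ((lt_div_iff₀ hr).mpr h) hb,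
      eventually_ge_atTop 1] with n hn hn1
    rw [one_div (n : ℝ)] at hn
    rw [← Real.rpow_inv_natCast_pow (ha n) (by omega : n ≠ 0), ← mul_pow]
    exact pow_le_one₀ (mul_nonneg (Real.rpow_nonneg (ha n) _) hr.le) ((lt_div_iff₀ hr).mp hn).le
  obtain ⟨C, hC⟩ := (isBoundedUnder_of_eventually_le hev).bddAbove_range
  exact ⟨C, fun n => hC ⟨n, rfl⟩⟩

theorem exists_gt_and_mul_pow_lt_one {P σ r : ℝ} {m : ℕ} (hP : 0 < P) (hm : m ≠ 0)
    (hσ : 0 ≤ σ) (hr : 0 ≤ r) (h : σ = 0 ∨ r < σ ^ (-(1 : ℝ) / m) * P ^ (-(1 : ℝ) / (P - 1))) :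
    ∃ t : ℝ≥0, r < t ∧ σ * (P ^ (1 / (P - 1)) * t) ^ m < 1 := by
  rcases hσ.eq_or_lt with rfl | hσ
  · refine ⟨(r + 1).toNNReal, ?_, by rw [zero_mul]; exact zero_lt_one⟩
    rw [Real.coe_toNNReal _ (by positivity)]
    exact lt_add_one r
  obtain ⟨t, hrt, htρ⟩ := exists_between (h.resolve_left hσ.ne')
  refine ⟨⟨t, hr.trans hrt.le⟩, hrt, ?_⟩
  have hlt : P ^ (1 / (P - 1)) * t < σ ^ (-(1 : ℝ) / m) :=
    calc P ^ (1 / (P - 1)) * t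
        < P ^ (1 / (P - 1)) * (σ ^ (-(1 : ℝ) / m) * P ^ (-(1 : ℝ) / (P - 1))) :=
          mul_lt_mul_of_pos_left htρ (by positivity)
      _ = σ ^ (-(1 : ℝ) / m) := by
          rw [mul_left_comm, ← Real.rpow_add hP, ← add_div, add_neg_cancel, zero_div,
            Real.rpow_zero, mul_one]
  have hpow : (σ ^ (-(1 : ℝ) / m)) ^ m = σ⁻¹ := by
    rw [← Real.rpow_natCast, ← Real.rpow_mul hσ.le, div_mul_cancel₀ _ (by exact_mod_cast hm),
      Real.rpow_neg_one]
  calc σ * (P ^ (1 / (P - 1)) * t) ^ m < σ * σ⁻¹ := by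
        rw [← hpow]
        gcongr
        exact mul_nonneg (by positivity) (hr.trans hrt.le)
    _ = 1 := mul_inv_cancel₀ hσ.ne'

theorem le_radius_egfSeries {p : ℕ} [Fact p.Prime] {K : Type*} [NontriviallyNormedField K]
    [Algebra ℚ_[p] K] (hK : ∀ q : ℚ_[p], ‖algebraMap ℚ_[p] K q‖ = ‖q‖) {B : Type*}
    [NormedAddCommGroup B] [NormedSpace K B] {c : ℕ → B} {t : ℝ≥0} {C : ℝ}
    (hc : ∀ j, ‖c j‖ * ((p : ℝ) ^ (1 / ((p : ℝ) - 1)) * t) ^ j ≤ C) :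
    (t : ℝ≥0∞) ≤ (egfSeries K c).radius := by
  refine (egfSeries K c).le_radius_of_bound C fun j => ?_
  calc ‖egfSeries K c j‖ * (t : ℝ) ^ j
      ≤ ((p : ℝ) ^ (1 / ((p : ℝ) - 1))) ^ j * ‖c j‖ * (t : ℝ) ^ j := by
        rw [norm_egfSeries]
        gcongr
        exact norm_inv_factorial_le hK j
    _ = ‖c j‖ * ((p : ℝ) ^ (1 / ((p : ℝ) - 1)) * t) ^ j := by ring
    _ ≤ C := hc j

theorem le_radius_egfSeries_spreadMod {p : ℕ} [Fact p.Prime] {K : Type*}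
    [NontriviallyNormedField K] [Algebra ℚ_[p] K]
    (hK : ∀ q : ℚ_[p], ‖algebraMap ℚ_[p] K q‖ = ‖q‖) {B : Type*} [NormedAddCommGroup B]
    [NormedSpace K B] {m : ℕ} {a : ℕ → B}
    (hb : IsBoundedUnder (· ≤ ·) atTop fun n : ℕ => ‖a n‖ ^ (1 / (n : ℝ))) {t : ℝ≥0} (ht : 0 < t)
    (hσt : limsup (fun n : ℕ => ‖a n‖ ^ (1 / (n : ℝ))) atTop *
      ((p : ℝ) ^ (1 / ((p : ℝ) - 1)) * t) ^ m < 1) (k i : ℕ) :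
    (t : ℝ≥0∞) ≤ (egfSeries K fun j => spreadMod m k a (j + i)).radius := by
  set s := (p : ℝ) ^ (1 / ((p : ℝ) - 1)) * t
  have hs : 0 < s :=
    mul_pos (Real.rpow_pos_of_pos (by exact_mod_cast (Fact.out : p.Prime).pos) _) ht
  obtain ⟨C, hC⟩ :=
    exists_mul_pow_le_of_limsup_mul_lt_one (fun n => norm_nonneg (a n)) hb (pow_pos hs m) hσt
  refine le_radius_egfSeries hK (C := C * s ^ k / s ^ i) fun j => ?_
  rw [le_div_iff₀ (pow_pos hs i), mul_assoc, ← pow_add]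
  exact norm_spreadMod_mul_pow_le hs.le hC (j + i)

theorem exists_mem_eball_le_radius_egfSeries_spreadMod {p : ℕ} [Fact p.Prime] {K : Type*}
    [NontriviallyNormedField K] [Algebra ℚ_[p] K]
    (hK : ∀ q : ℚ_[p], ‖algebraMap ℚ_[p] K q‖ = ‖q‖) {B : Type*} [NormedAddCommGroup B]
    [NormedSpace K B] {a : ℕ → B}
    (hb : IsBoundedUnder (· ≤ ·) atTop fun n : ℕ => ‖a n‖ ^ (1 / (n : ℝ))) {σ : ℝ}
    (hσ : limsup (fun n : ℕ => ‖a n‖ ^ (1 / (n : ℝ))) atTop = σ) {m : ℕ} (hm : m ≠ 0) {z : K}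
    (hz : σ = 0 ∨ ‖z‖ < σ ^ (-(1 : ℝ) / m) * (p : ℝ) ^ (-(1 : ℝ) / ((p : ℝ) - 1))) :
    ∃ t : ℝ≥0, z ∈ eball 0 (t : ℝ≥0∞) ∧
      ∀ k i, (t : ℝ≥0∞) ≤ (egfSeries K fun j => spreadMod m k a (j + i)).radius := by
  have hσ0 : 0 ≤ σ := hσ ▸ le_limsup_of_frequently_le (.of_forall fun n => by positivity) hb
  obtain ⟨t, hzt, hσt⟩ := exists_gt_and_mul_pow_lt_one
    (by exact_mod_cast (Fact.out : p.Prime).pos) hm hσ0 (norm_nonneg z) hz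
  exact ⟨t, mem_eball_zero_iff.mpr (ENNReal.coe_lt_coe.mpr (NNReal.coe_lt_coe.mp hzt)),
    le_radius_egfSeries_spreadMod hK hb ((norm_nonneg z).trans_lt hzt) (hσ ▸ hσt)⟩

theorem mittag_leffler_solves_equation_general
    {p : ℕ} [Fact p.Prime]
    {K : Type*} [NontriviallyNormedField K] [Algebra ℚ_[p] K]
    (hK : ∀ q : ℚ_[p], ‖algebraMap ℚ_[p] K q‖ = ‖q‖)
    {B : Type*} [NormedAddCommGroup B] [NormedSpace K B] [CompleteSpace B]
    (D : Submodule K B) (A : B →ₗ[K] B)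
    (hA : IsClosed {q : B × B | q.1 ∈ D ∧ A q.1 = q.2})
    (m : ℕ) (hm : 1 ≤ m)
    (x : B)
    (hxdom : ∀ n : ℕ, (⇑A)^[n] x ∈ D)
    (hxE : ∃ α > (0 : ℝ), ∃ C > (0 : ℝ), ∀ n : ℕ, ‖(⇑A)^[n] x‖ ≤ C * α ^ n)
    (σ : ℝ)
    (hσ : σ = Filter.limsup (fun n : ℕ => ‖(⇑A)^[n] x‖ ^ (1 / (n : ℝ))) atTop)
    (F : ℕ → B → K → B)
    (hF : ∀ (k : ℕ) (v : B) (z : K),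
      F k v z = ∑' n : ℕ, ((m * n + k).factorial : K)⁻¹ • z ^ (m * n + k) • (⇑A)^[n] v) :
    (∀ k < m,
      (∀ z : K,
        (σ = 0 ∨ ‖z‖ < σ ^ (-(1 : ℝ) / (m : ℝ)) * (p : ℝ) ^ (-(1 : ℝ) / ((p : ℝ) - 1))) →
        iteratedDeriv m (F k x) z = A (F k x z)) ∧
      (∀ i < m, iteratedDeriv i (F k x) 0 = if i = k then x else 0)) ∧
    (∀ l : ℕ, ∀ z : K,
      (σ = 0 ∨ ‖z‖ < σ ^ (-(1 : ℝ) / (m : ℝ)) * (p : ℝ) ^ (-(1 : ℝ) / ((p : ℝ) - 1))) →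
      iteratedDeriv (m * l) (F 0 x) z = F 0 ((⇑A)^[l] x) z) := by
  have : CharZero K := charZero_of_injective_algebraMap (algebraMap ℚ_[p] K).injective
  have hm0 : 0 < m := hm
  obtain ⟨α, hα, C, -, hxC⟩ := hxE
  have hbdd := isBoundedUnder_rpow_one_div_of_le_mul_pow hα.le (fun n => norm_nonneg _) hxC
  set ρ := σ ^ (-(1 : ℝ) / (m : ℝ)) * (p : ℝ) ^ (-(1 : ℝ) / ((p : ℝ) - 1))
  set c : ℕ → ℕ → B := fun k => spreadMod m k fun n => (⇑A)^[n] x with hc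
  have hFc : ∀ k < m, ∀ l, F k ((⇑A)^[l] x) = egf fun j => c k (j + m * l) := fun k hk l => by
    funext z
    simp only [hF, hc, ← egf_spreadMod hk, spreadMod_iterate_add_mul hm0]
  have hFx : ∀ k < m, F k x = egf (c k) := fun k hk => by simpa using hFc k hk 0
  have hloc := fun z (hz : σ = 0 ∨ ‖z‖ < ρ) =>
    exists_mem_eball_le_radius_egfSeries_spreadMod hK hbdd hσ.symm hm0.ne' hz
  have hderiv : ∀ k < m, ∀ z, (σ = 0 ∨ ‖z‖ < ρ) → ∀ n,
      iteratedDeriv n (F k x) z = egf (fun j => c k (j + n)) z := by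
    intro k hk z hz n
    obtain ⟨t, hzt, ht⟩ := hloc z hz
    rw [hFx k hk]
    exact eqOn_iteratedDeriv_egf (ht k) n hzt
  refine ⟨fun k hk => ⟨fun z hz => ?_, fun i hi => ?_⟩, fun l z hz => ?_⟩
  · obtain ⟨t, hzt, ht⟩ := hloc z hz
    rw [hderiv k hk z hz, hFx k hk]
    exact (map_egf_of_isClosed_graph hA (spreadMod_mem hxdom)
      (apply_spreadMod_iterate hm0 (map_zero A) x) (eball_subset_eball (ht k 0) hzt)
      (eball_subset_eball (ht k m) hzt)).symm
  · have hp : (0 : ℝ) < p := by exact_mod_cast (Fact.out : p.Prime).pos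
    have hσ0 : 0 ≤ σ := hσ ▸ le_limsup_of_frequently_le (.of_forall fun n => by positivity) hbdd
    have hdisc0 : σ = 0 ∨ ‖(0 : K)‖ < ρ := hσ0.eq_or_lt.imp Eq.symm fun h => by
      rw [norm_zero]
      exact mul_pos (Real.rpow_pos_of_pos h _) (Real.rpow_pos_of_pos hp _)
    rw [hderiv k hk 0 hdisc0, egf_zero, zero_add]
    exact spreadMod_of_lt hi _
  · rw [hderiv 0 hm0 z hz, hFc 0 hm0 l]

theorem mittag_leffler_solves_equation
    {p : ℕ} [Fact p.Prime]
    {K : Type*} [NontriviallyNormedField K] [CompleteSpace K] [IsAlgClosed K]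
    [IsUltrametricDist K] [Algebra ℚ_[p] K]
    (hK : ∀ q : ℚ_[p], ‖algebraMap ℚ_[p] K q‖ = ‖q‖)
    {B : Type*} [NormedAddCommGroup B] [NormedSpace K B] [CompleteSpace B]
    [IsUltrametricDist B]
    (D : Submodule K B) (A : B →ₗ[K] B)
    (hA : IsClosed {q : B × B | q.1 ∈ D ∧ A q.1 = q.2})
    (m : ℕ) (hm : 1 ≤ m)
    (x : B)
    (hxdom : ∀ n : ℕ, (⇑A)^[n] x ∈ D)
    (hxE : ∃ α > (0 : ℝ), ∃ C > (0 : ℝ), ∀ n : ℕ, ‖(⇑A)^[n] x‖ ≤ C * α ^ n)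
    (σ : ℝ)
    (hσ : σ = Filter.limsup (fun n : ℕ => ‖(⇑A)^[n] x‖ ^ (1 / (n : ℝ))) atTop)
    (F : ℕ → B → K → B)
    (hF : ∀ (k : ℕ) (v : B) (z : K),
      F k v z = ∑' n : ℕ, ((m * n + k).factorial : K)⁻¹ • z ^ (m * n + k) • (⇑A)^[n] v) :
    (∀ k < m,
      (∀ z : K,
        (σ = 0 ∨ ‖z‖ < σ ^ (-(1 : ℝ) / (m : ℝ)) * (p : ℝ) ^ (-(1 : ℝ) / ((p : ℝ) - 1))) →
        iteratedDeriv m (F k x) z = A (F k x z)) ∧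
      (∀ i < m, iteratedDeriv i (F k x) 0 = if i = k then x else 0)) ∧
    (∀ l : ℕ, ∀ z : K,
      (σ = 0 ∨ ‖z‖ < σ ^ (-(1 : ℝ) / (m : ℝ)) * (p : ℝ) ^ (-(1 : ℝ) / ((p : ℝ) - 1))) →
      iteratedDeriv (m * l) (F 0 x) z = F 0 ((⇑A)^[l] x) z) :=
  mittag_leffler_solves_equation_general hK D A hA m hm x hxdom hxE σ hσ F hF
end
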